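/- (Sum of all non-designated blocks is zero.) With the B-CP* construction, for any i, j ∈ [N_e] and k ∈ [N_r]: ∑_{γ ∈ [2N_eN_r] \ {α(k,i), β(k,i)}} ⟨a^{(b)}_{iγ} ∘ b^{(b)}_{jγ}, c^{(b)}_{kγ}⟩ = 0. -/

import Mathlib

/-!
Split each block of `2 N_e` consecutive indices into two halves and pair `γ` in the first half
with its partner `γ + N_e` in the second. Partners have the same `a`- and `b`-vectors, and the
`c`-vector is `r` on a first half. Outside block `k` the partner carries `-r`, so the two terms
cancel. Inside block `k` both carry `r`, but then `a = q` unless `γ = α(k,i)`, and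
`⟨q ∘ p, r⟩ = ⟨q ∘ r, r⟩ = 0`. The pairing is a fixed-point-free involution which swaps
`α(k,i)` and `β(k,i)`, so the sum over the remaining indices vanishes.
-/

noncomputable def pvec : Fin 4 → ℝ := ![1/2, 1/2, -(1/2), -(1/2)]
noncomputable def qvec : Fin 4 → ℝ := ![1/2, -(1/2), 1/2, -(1/2)]
noncomputable def rvec : Fin 4 → ℝ := ![1/2, 1/2, 1/2, 1/2]

noncomputable def trip (u v w : Fin 4 → ℝ) : ℝ := ∑ t : Fin 4, u t * v t * w t

def iotaF (Ne γ : ℕ) : ℕ := ((γ - 1) % (2 * Ne)) % Ne + 1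
def kappaF (Ne γ : ℕ) : ℕ := (γ - 1) / (2 * Ne) + 1
def alphaF (Ne k m : ℕ) : ℕ := 2 * Ne * (k - 1) + m
def betaF (Ne k m : ℕ) : ℕ := alphaF Ne k m + Ne

noncomputable def avec (Ne i γ : ℕ) : Fin 4 → ℝ :=
  if γ % Ne = i % Ne then pvec else qvec

noncomputable def bvec (Ne : ℕ) (x : ℕ → ℕ → ℕ → ℕ) (j γ : ℕ) : Fin 4 → ℝ :=
  if x (iotaF Ne γ) j (kappaF Ne γ) = 1 then pvec else rvec

noncomputable def cvec (Ne k γ : ℕ) : Fin 4 → ℝ :=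
  if (γ - 1) % (2 * Ne) < Ne ∨ kappaF Ne γ = k then rvec else -rvec

open Finset

lemma trip_neg_right (u v w : Fin 4 → ℝ) : trip u v (-w) = -trip u v w := by
  simp only [trip, Pi.neg_apply, mul_neg, sum_neg_distrib]

lemma trip_qvec_pvec_rvec : trip qvec pvec rvec = 0 := by
  norm_num [trip, Fin.sum_univ_succ, qvec, pvec, rvec]

lemma trip_qvec_rvec_rvec : trip qvec rvec rvec = 0 := by
  norm_num [trip, Fin.sum_univ_succ, qvec, rvec]

lemma trip_qvec_bvec_rvec (Ne : ℕ) (x : ℕ → ℕ → ℕ → ℕ) (j γ : ℕ) :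
    trip qvec (bvec Ne x j γ) rvec = 0 := by
  unfold bvec
  split_ifs
  exacts [trip_qvec_pvec_rvec, trip_qvec_rvec_rvec]

/-- The index in the other half of the same block of length `2 * n`, at the same offset. -/
def partner (n γ : ℕ) : ℕ := if (γ - 1) % (2 * n) < n then γ + n else γ - n

section Partner

variable {n γ : ℕ}

lemma partner_sub_one_div_mod (hn : 0 < n) (hγ : 1 ≤ γ) :
    (partner n γ - 1) / (2 * n) = (γ - 1) / (2 * n) ∧
      (partner n γ - 1) % (2 * n) =
        if (γ - 1) % (2 * n) < n then (γ - 1) % (2 * n) + n else (γ - 1) % (2 * n) - n := by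
  rw [Nat.div_mod_unique (by omega)]
  have hdm := Nat.div_add_mod (γ - 1) (2 * n)
  have hlt := Nat.mod_lt (γ - 1) (show 0 < 2 * n by omega)
  unfold partner
  split_ifs <;> omega

lemma kappaF_partner (hn : 0 < n) (hγ : 1 ≤ γ) : kappaF n (partner n γ) = kappaF n γ := by
  rw [kappaF, (partner_sub_one_div_mod hn hγ).1, kappaF]

lemma iotaF_partner (hn : 0 < n) (hγ : 1 ≤ γ) : iotaF n (partner n γ) = iotaF n γ := by
  rw [iotaF, (partner_sub_one_div_mod hn hγ).2, iotaF]
  split_ifs with h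
  · rw [Nat.add_mod_right]
  · rw [Nat.mod_eq_sub_mod (not_lt.mp h)]

lemma partner_mod_self : partner n γ % n = γ % n := by
  unfold partner
  split_ifs with h
  · rw [Nat.add_mod_right]
  · have := Nat.mod_le (γ - 1) (2 * n)
    rw [Nat.mod_eq_sub_mod (a := γ) (by omega)]

lemma partner_ne_self (hn : 0 < n) : partner n γ ≠ γ := by
  unfold partner
  split_ifs with h
  · omega
  · have := Nat.mod_le (γ - 1) (2 * n)
    omega

lemma one_le_partner (hn : 0 < n) : 1 ≤ partner n γ := by
  unfold partner
  split_ifs with h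
  · omega
  · have := Nat.mod_le (γ - 1) (2 * n)
    omega

lemma partner_partner (hn : 0 < n) (hγ : 1 ≤ γ) : partner n (partner n γ) = γ := by
  have hmod := (partner_sub_one_div_mod hn hγ).2
  have hlt := Nat.mod_lt (γ - 1) (show 0 < 2 * n by omega)
  have hle := Nat.mod_le (γ - 1) (2 * n)
  rw [partner.eq_1 n (partner n γ), hmod]
  unfold partner
  by_cases h : (γ - 1) % (2 * n) < n
  · rw [if_pos h, if_pos h, if_neg (by omega)]
    omega
  · rw [if_neg h, if_neg h, if_pos (by omega)]
    omega

lemma mem_Icc_iff_div_lt (hn : 0 < n) (N : ℕ) :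
    γ ∈ Icc 1 (2 * n * N) ↔ 1 ≤ γ ∧ (γ - 1) / (2 * n) < N := by
  rw [mem_Icc, Nat.div_lt_iff_lt_mul (by omega), mul_comm N]
  omega

lemma partner_mem_Icc (hn : 0 < n) {N : ℕ} (hγ : γ ∈ Icc 1 (2 * n * N)) :
    partner n γ ∈ Icc 1 (2 * n * N) := by
  rw [mem_Icc_iff_div_lt hn] at hγ ⊢
  exact ⟨one_le_partner hn, (partner_sub_one_div_mod hn hγ.1).1 ▸ hγ.2⟩

lemma partner_alphaF {i : ℕ} (k : ℕ) (hi1 : 1 ≤ i) (hi2 : i ≤ n) :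
    partner n (alphaF n k i) = betaF n k i := by
  have h : alphaF n k i - 1 = 2 * n * (k - 1) + (i - 1) := by
    rw [alphaF, Nat.add_sub_assoc hi1]
  rw [partner, h, Nat.mul_add_mod, Nat.mod_eq_of_lt (by omega), if_pos (by omega), betaF]

lemma partner_betaF {i : ℕ} (k : ℕ) (hi1 : 1 ≤ i) (hi2 : i ≤ n) :
    partner n (betaF n k i) = alphaF n k i := by
  rw [← partner_alphaF k hi1 hi2, partner_partner (by omega) (by unfold alphaF; omega)]

lemma partner_mem_Icc_sdiff {i k N : ℕ} (hi1 : 1 ≤ i) (hi2 : i ≤ n)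
    (hγ : γ ∈ Icc 1 (2 * n * N) \ {alphaF n k i, betaF n k i}) :
    partner n γ ∈ Icc 1 (2 * n * N) \ {alphaF n k i, betaF n k i} := by
  have hn : 0 < n := by omega
  simp only [mem_sdiff, mem_insert, mem_singleton, not_or] at hγ ⊢
  obtain ⟨hIcc, hα, hβ⟩ := hγ
  have hpp := partner_partner hn (mem_Icc.mp hIcc).1
  refine ⟨partner_mem_Icc hn hIcc, fun h => hβ ?_, fun h => hα ?_⟩
  · rw [← hpp, h, partner_alphaF k hi1 hi2]
  · rw [← hpp, h, partner_betaF k hi1 hi2]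

end Partner

lemma eq_alphaF_of_mod_eq {n i k γ : ℕ} (hi1 : 1 ≤ i) (hi2 : i ≤ n) (hγ : 1 ≤ γ)
    (hfirst : (γ - 1) % (2 * n) < n) (hκ : kappaF n γ = k) (hmod : γ % n = i % n) :
    γ = alphaF n k i := by
  have hmod' : (γ - 1) % n = (i - 1) % n := by
    refine Nat.ModEq.add_right_cancel' 1 ?_
    rwa [Nat.sub_add_cancel hγ, Nat.sub_add_cancel hi1]
  rw [← Nat.mod_mod_of_dvd _ (dvd_mul_left n 2), Nat.mod_eq_of_lt hfirst,
    Nat.mod_eq_of_lt (show i - 1 < n by omega)] at hmod'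
  have hdm := Nat.div_add_mod (γ - 1) (2 * n)
  have hκ' : (γ - 1) / (2 * n) = k - 1 := by
    rw [← hκ, kappaF, Nat.add_sub_cancel]
  rw [hκ'] at hdm
  unfold alphaF
  omega

noncomputable def term (Ne i j k : ℕ) (x : ℕ → ℕ → ℕ → ℕ) (γ : ℕ) : ℝ :=
  trip (avec Ne i γ) (bvec Ne x j γ) (cvec Ne k γ)

section Cancellation

variable {Ne i j k : ℕ} (x : ℕ → ℕ → ℕ → ℕ)

lemma term_add_term_partner_of_first_half (hi1 : 1 ≤ i) (hi2 : i ≤ Ne) {γ : ℕ} (hγ : 1 ≤ γ)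
    (hfirst : (γ - 1) % (2 * Ne) < Ne) (hα : γ ≠ alphaF Ne k i) :
    term Ne i j k x γ + term Ne i j k x (partner Ne γ) = 0 := by
  have hNe : 0 < Ne := by omega
  have ha : avec Ne i (partner Ne γ) = avec Ne i γ := by
    rw [avec, partner_mod_self, avec]
  have hb : bvec Ne x j (partner Ne γ) = bvec Ne x j γ := by
    rw [bvec, iotaF_partner hNe hγ, kappaF_partner hNe hγ, bvec]
  have hc : cvec Ne k γ = rvec := if_pos (Or.inl hfirst)
  have hsecond : ¬(partner Ne γ - 1) % (2 * Ne) < Ne := by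
    rw [(partner_sub_one_div_mod hNe hγ).2, if_pos hfirst]
    omega
  unfold term
  rw [ha, hb, hc, cvec, kappaF_partner hNe hγ]
  by_cases hκ : kappaF Ne γ = k
  · -- in block `k` the only first-half index with `a = p` is `α(k,i)`
    have hq : avec Ne i γ = qvec :=
      if_neg fun hmod => hα (eq_alphaF_of_mod_eq hi1 hi2 hγ hfirst hκ hmod)
    rw [if_pos (Or.inr hκ), hq, trip_qvec_bvec_rvec, add_zero]
  · rw [if_neg (not_or.mpr ⟨hsecond, hκ⟩), trip_neg_right, add_neg_cancel]

lemma term_add_term_partner (hi1 : 1 ≤ i) (hi2 : i ≤ Ne) {γ : ℕ} (hγ : 1 ≤ γ)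
    (hα : γ ≠ alphaF Ne k i) (hβ : γ ≠ betaF Ne k i) :
    term Ne i j k x γ + term Ne i j k x (partner Ne γ) = 0 := by
  have hNe : 0 < Ne := by omega
  by_cases hfirst : (γ - 1) % (2 * Ne) < Ne
  · exact term_add_term_partner_of_first_half x hi1 hi2 hγ hfirst hα
  · have hpartner_first : (partner Ne γ - 1) % (2 * Ne) < Ne := by
      have := Nat.mod_lt (γ - 1) (show 0 < 2 * Ne by omega)
      rw [(partner_sub_one_div_mod hNe hγ).2, if_neg hfirst]
      omega
    have hpartner_α : partner Ne γ ≠ alphaF Ne k i := fun h =>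
      hβ (by rw [← partner_partner hNe hγ, h, partner_alphaF k hi1 hi2])
    have := term_add_term_partner_of_first_half (j := j) x hi1 hi2 (one_le_partner hNe)
      hpartner_first hpartner_α
    rwa [partner_partner hNe hγ, add_comm] at this

end Cancellation

theorem stmt15_general (Ne Nr : ℕ)
    (x : ℕ → ℕ → ℕ → ℕ)
    (i j k : ℕ)
    (hi1 : 1 ≤ i) (hi2 : i ≤ Ne) :
    ∑ γ ∈ (Finset.Icc 1 (2 * Ne * Nr)) \ {alphaF Ne k i, betaF Ne k i},
      trip (avec Ne i γ) (bvec Ne x j γ) (cvec Ne k γ) = 0 := by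
  have hNe : 0 < Ne := by omega
  have hmem : ∀ γ ∈ Icc 1 (2 * Ne * Nr) \ {alphaF Ne k i, betaF Ne k i},
      1 ≤ γ ∧ γ ≠ alphaF Ne k i ∧ γ ≠ betaF Ne k i := by
    intro γ hγ
    simp only [mem_sdiff, mem_Icc, mem_insert, mem_singleton, not_or] at hγ
    exact ⟨hγ.1.1, hγ.2⟩
  exact sum_involution (fun γ _ => partner Ne γ)
    (fun γ hγ => term_add_term_partner x hi1 hi2 (hmem γ hγ).1 (hmem γ hγ).2.1 (hmem γ hγ).2.2)
    (fun γ _ _ => partner_ne_self hNe) (fun γ hγ => partner_mem_Icc_sdiff hi1 hi2 hγ)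
    (fun γ hγ => partner_partner hNe (hmem γ hγ).1)

theorem stmt15 (Ne Nr : ℕ) (hNe : 0 < Ne) (hNr : 0 < Nr)
    (x : ℕ → ℕ → ℕ → ℕ) (hx : ∀ i j k, x i j k = 0 ∨ x i j k = 1)
    (i j k : ℕ)
    (hi1 : 1 ≤ i) (hi2 : i ≤ Ne) (hj1 : 1 ≤ j) (hj2 : j ≤ Ne)
    (hk1 : 1 ≤ k) (hk2 : k ≤ Nr) :
    ∑ γ ∈ (Finset.Icc 1 (2 * Ne * Nr)) \ {alphaF Ne k i, betaF Ne k i},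
      trip (avec Ne i γ) (bvec Ne x j γ) (cvec Ne k γ) = 0 :=
  stmt15_general Ne Nr x i j k hi1 hi2
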